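/- Assume good X and good X'. If y ∉ {x,x'}, fresh xs y X, fresh xs y X', and X[(Var xs y)/x]_xs = X'[(Var xs y)/x']_xs, then Abs xs x X = Abs xs x' X'. -/

import Mathlib

open scoped Classical

universe u

section Binding

variable (var varsort index bindex opsym : Type u)

/-! ### Inputs -/

/-- An `(α,β)`-input: a partial function from `α` to `β`. -/
abbrev Input (α β : Type u) : Type u := α → Option β

/-- The domain of an input. -/
def idom {α β : Type u} (inp : Input α β) : Set α := {a | inp a ≠ none}

/-- The componentwise lifting of a predicate to inputs. -/
def liftP {α β : Type u} (P : β → Prop) (inp : Input α β) : Prop :=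
  ∀ a b, inp a = some b → P b

/-- The componentwise lifting of a function to inputs. -/
def liftF {α β γ : Type u} (f : β → γ) (inp : Input α β) : Input α γ :=
  fun a => (inp a).map f

/-- An input is small if its domain has cardinality smaller than that of `var`. -/
def smallDom {α β : Type u} (inp : Input α β) : Prop :=
  Cardinal.mk (idom inp) < Cardinal.mk var

/-! ### Quasiterms -/

mutual
/-- Quasiterms: raw terms before quotienting by alpha-equivalence. -/
inductive QTerm : Type u where
  | qVar : varsort → var → QTerm
  | qOp : opsym → (index → Option QTerm) → (bindex → Option QAbs) → QTerm
/-- Quasiabstractions. -/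
inductive QAbs : Type u where
  | qAbs : varsort → var → QTerm → QAbs
end

/-- Transposition of two variables. -/
noncomputable def swapVar (z1 z2 x : var) : var :=
  if x = z1 then z2 else if x = z2 then z1 else x

/-- Sort-aware transposition of variables (acts only on variables of varsort `zs`). -/
noncomputable def swapVarS (zs xs : varsort) (z1 z2 x : var) : var :=
  if xs = zs then swapVar var z1 z2 x else x

variable {var varsort index bindex opsym}

/-- Swapping of the variables `z1`, `z2` at varsort `zs` in a quasiterm
(transposing them everywhere, including binding positions). -/
noncomputable def qSwap (z1 z2 : var) (zs : varsort) :
    QTerm var varsort index bindex opsym → QTerm var varsort index bindex opsym :=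
  QTerm.rec (motive_1 := fun _ => QTerm var varsort index bindex opsym)
    (motive_2 := fun _ => QAbs var varsort index bindex opsym)
    (motive_3 := fun _ => Option (QTerm var varsort index bindex opsym))
    (motive_4 := fun _ => Option (QAbs var varsort index bindex opsym))
    (fun xs x => .qVar xs (swapVarS var varsort zs xs z1 z2 x))
    (fun d _ _ rinp rbinp => .qOp d rinp rbinp)
    (fun xs x _ rX => .qAbs xs (swapVarS var varsort zs xs z1 z2 x) rX)
    none (fun _ r => some r) none (fun _ r => some r)

/-- Swapping of variables in a quasiabstraction. -/
noncomputable def qSwapAbs (z1 z2 : var) (zs : varsort) :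
    QAbs var varsort index bindex opsym → QAbs var varsort index bindex opsym
  | .qAbs xs x X => .qAbs xs (swapVarS var varsort zs xs z1 z2 x) (qSwap z1 z2 zs X)

/-! ### Freshness and goodness -/

mutual
/-- `QFresh ys y X`: the variable `y` of varsort `ys` has no free occurrence in `X`. -/
inductive QFresh : varsort → var → QTerm var varsort index bindex opsym → Prop where
  | qVar : ∀ {ys y xs x}, (ys, y) ≠ (xs, x) → QFresh ys y (.qVar xs x)
  | qOp : ∀ {ys y d inp binp}, (∀ i X, inp i = some X → QFresh ys y X) →
      (∀ j A, binp j = some A → QFreshAbs ys y A) → QFresh ys y (.qOp d inp binp)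
/-- Freshness for quasiabstractions. -/
inductive QFreshAbs : varsort → var → QAbs var varsort index bindex opsym → Prop where
  | qAbs_bound : ∀ {xs x X}, QFreshAbs xs x (.qAbs xs x X)
  | qAbs_body : ∀ {ys y xs x X}, QFresh ys y X → QFreshAbs ys y (.qAbs xs x X)
end

mutual
/-- Good quasiterms: all constructors branch less than `|var|`. -/
inductive QGood : QTerm var varsort index bindex opsym → Prop where
  | qVar : ∀ {xs x}, QGood (.qVar xs x)
  | qOp : ∀ {d inp binp}, (∀ i X, inp i = some X → QGood X) →
      (∀ j A, binp j = some A → QGoodAbs A) →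
      smallDom var inp → smallDom var binp → QGood (.qOp d inp binp)
/-- Good quasiabstractions. -/
inductive QGoodAbs : QAbs var varsort index bindex opsym → Prop where
  | qAbs : ∀ {xs x X}, QGood X → QGoodAbs (.qAbs xs x X)
end

/-! ### Alpha-equivalence -/

mutual
/-- Alpha-equivalence of quasiterms. -/
inductive Alpha : QTerm var varsort index bindex opsym →
    QTerm var varsort index bindex opsym → Prop where
  | qVar : ∀ {xs x}, Alpha (.qVar xs x) (.qVar xs x)
  | qOp : ∀ {d inp binp inp' binp'},
      (∀ i, inp i = none ↔ inp' i = none) →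
      (∀ i X X', inp i = some X → inp' i = some X' → Alpha X X') →
      (∀ j, binp j = none ↔ binp' j = none) →
      (∀ j A A', binp j = some A → binp' j = some A' → AlphaAbs A A') →
      Alpha (.qOp d inp binp) (.qOp d inp' binp')
/-- Alpha-equivalence of quasiabstractions (the exists-fresh formulation). -/
inductive AlphaAbs : QAbs var varsort index bindex opsym →
    QAbs var varsort index bindex opsym → Prop where
  | qAbs : ∀ {xs x x' X X' y}, y ∉ ({x, x'} : Set var) →
      QFresh xs y X → QFresh xs y X' →
      Alpha (qSwap y x xs X) (qSwap y x' xs X') →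
      AlphaAbs (.qAbs xs x X) (.qAbs xs x' X')
end

/-! ### Terms and abstractions as quotients -/

variable (var varsort index bindex opsym)

/-- Terms: quasiterms modulo alpha-equivalence. -/
def Term : Type u := Quot (@Alpha var varsort index bindex opsym)

/-- Abstractions: quasiabstractions modulo alpha-equivalence. -/
def Abstr : Type u := Quot (@AlphaAbs var varsort index bindex opsym)

variable {var varsort index bindex opsym}

/-- The projection from quasiterms to terms. -/
def tmk : QTerm var varsort index bindex opsym → Term var varsort index bindex opsym :=
  Quot.mk _

/-- The projection from quasiabstractions to abstractions. -/
def amk : QAbs var varsort index bindex opsym → Abstr var varsort index bindex opsym :=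
  Quot.mk _

/-- A representative of a term. -/
noncomputable def trep (X : Term var varsort index bindex opsym) :
    QTerm var varsort index bindex opsym := Quot.out X

/-- A representative of an abstraction. -/
noncomputable def arep (A : Abstr var varsort index bindex opsym) :
    QAbs var varsort index bindex opsym := Quot.out A

/-- Good terms. -/
def good (X : Term var varsort index bindex opsym) : Prop := QGood (trep X)

/-- Good abstractions. -/
def goodAbs (A : Abstr var varsort index bindex opsym) : Prop := QGoodAbs (arep A)

/-- The variable-injection constructor on terms. -/
def Var (xs : varsort) (x : var) : Term var varsort index bindex opsym :=
  tmk (.qVar xs x)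

/-- The operation constructor on terms. -/
noncomputable def Op (d : opsym) (inp : Input index (Term var varsort index bindex opsym))
    (binp : Input bindex (Abstr var varsort index bindex opsym)) :
    Term var varsort index bindex opsym :=
  tmk (.qOp d (liftF trep inp) (liftF arep binp))

/-- The abstraction constructor. -/
noncomputable def Abs (xs : varsort) (x : var) (X : Term var varsort index bindex opsym) :
    Abstr var varsort index bindex opsym :=
  amk (.qAbs xs x (trep X))

/-- Freshness on terms. -/
def fresh (ys : varsort) (y : var) (X : Term var varsort index bindex opsym) : Prop :=
  QFresh ys y (trep X)

/-- Freshness on abstractions. -/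
def freshAbs (ys : varsort) (y : var) (A : Abstr var varsort index bindex opsym) : Prop :=
  QFreshAbs ys y (arep A)

/-- Swapping on terms. -/
noncomputable def tswap (X : Term var varsort index bindex opsym)
    (z1 z2 : var) (zs : varsort) : Term var varsort index bindex opsym :=
  tmk (qSwap z1 z2 zs (trep X))

/-! ### Substitution -/

mutual
/-- The graph of capture-avoiding substitution on quasiterms:
`QSubst X Y y ys Z` means that `Z` is a result of substituting `Y` for the free
occurrences of the variable `y` of varsort `ys` in `X` (along a capture-free
representative). -/
inductive QSubst : QTerm var varsort index bindex opsym →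
    QTerm var varsort index bindex opsym → var → varsort →
    QTerm var varsort index bindex opsym → Prop where
  | var_eq : ∀ {Y y ys}, QSubst (.qVar ys y) Y y ys Y
  | var_ne : ∀ {Y y ys xs x}, (xs, x) ≠ (ys, y) → QSubst (.qVar xs x) Y y ys (.qVar xs x)
  | op : ∀ {Y y ys d inp binp inp' binp'},
      (∀ i, inp i = none ↔ inp' i = none) →
      (∀ i X X', inp i = some X → inp' i = some X' → QSubst X Y y ys X') →
      (∀ j, binp j = none ↔ binp' j = none) →
      (∀ j A A', binp j = some A → binp' j = some A' → QSubstAbs A Y y ys A') →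
      QSubst (.qOp d inp binp) Y y ys (.qOp d inp' binp')
/-- The graph of capture-avoiding substitution on quasiabstractions. -/
inductive QSubstAbs : QAbs var varsort index bindex opsym →
    QTerm var varsort index bindex opsym → var → varsort →
    QAbs var varsort index bindex opsym → Prop where
  | abs : ∀ {Y y ys xs x X X'}, (xs, x) ≠ (ys, y) → QFresh xs x Y →
      QSubst X Y y ys X' → QSubstAbs (.qAbs xs x X) Y y ys (.qAbs xs x X')
end

/-- The graph of capture-avoiding substitution on terms. -/
def SubstRel (X Y : Term var varsort index bindex opsym) (y : var) (ys : varsort)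
    (Z : Term var varsort index bindex opsym) : Prop :=
  ∃ qX qZ, tmk qX = X ∧ tmk qZ = Z ∧ QSubst qX (trep Y) y ys qZ

/-- Capture-avoiding substitution on terms: `subst X Y y ys` is `X[Y/y]_ys`. -/
noncomputable def subst (X Y : Term var varsort index bindex opsym)
    (y : var) (ys : varsort) : Term var varsort index bindex opsym :=
  if h : ∃ Z, SubstRel X Y y ys Z then h.choose else X

/-- The graph of capture-avoiding substitution on abstractions. -/
def SubstAbsRel (A : Abstr var varsort index bindex opsym)
    (Y : Term var varsort index bindex opsym) (y : var) (ys : varsort)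
    (B : Abstr var varsort index bindex opsym) : Prop :=
  ∃ qA qB, amk qA = A ∧ amk qB = B ∧ QSubstAbs qA (trep Y) y ys qB

/-- Capture-avoiding substitution on abstractions: `substAbs A Y y ys` is `A[Y/y]_ys`. -/
noncomputable def substAbs (A : Abstr var varsort index bindex opsym)
    (Y : Term var varsort index bindex opsym) (y : var) (ys : varsort) :
    Abstr var varsort index bindex opsym :=
  if h : ∃ B, SubstAbsRel A Y y ys B then h.choose else A

/-! ### Parallel substitution -/

mutual
/-- The graph of capture-avoiding parallel substitution on quasiterms, along an
assignment `ρ : varsort → var → Option qterm`. -/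
inductive QPSubst : QTerm var varsort index bindex opsym →
    (varsort → var → Option (QTerm var varsort index bindex opsym)) →
    QTerm var varsort index bindex opsym → Prop where
  | var_some : ∀ {ρ xs x Y}, ρ xs x = some Y → QPSubst (.qVar xs x) ρ Y
  | var_none : ∀ {ρ xs x}, ρ xs x = none → QPSubst (.qVar xs x) ρ (.qVar xs x)
  | op : ∀ {ρ d inp binp inp' binp'},
      (∀ i, inp i = none ↔ inp' i = none) →
      (∀ i X X', inp i = some X → inp' i = some X' → QPSubst X ρ X') →
      (∀ j, binp j = none ↔ binp' j = none) →
      (∀ j A A', binp j = some A → binp' j = some A' → QPSubstAbs A ρ A') →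
      QPSubst (.qOp d inp binp) ρ (.qOp d inp' binp')
/-- The graph of capture-avoiding parallel substitution on quasiabstractions. -/
inductive QPSubstAbs : QAbs var varsort index bindex opsym →
    (varsort → var → Option (QTerm var varsort index bindex opsym)) →
    QAbs var varsort index bindex opsym → Prop where
  | abs : ∀ {ρ xs x X X'}, ρ xs x = none →
      (∀ ys y Y, ρ ys y = some Y → QFresh xs x Y) →
      QPSubst X ρ X' → QPSubstAbs (.qAbs xs x X) ρ (.qAbs xs x X')
end

/-- Turning a term-valued assignment into a quasiterm-valued one, by picking
representatives. -/
noncomputable def qassign (ρ : varsort → var → Option (Term var varsort index bindex opsym)) :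
    varsort → var → Option (QTerm var varsort index bindex opsym) :=
  fun xs x => (ρ xs x).map trep

/-- The graph of parallel substitution on terms. -/
def PSubstRel (X : Term var varsort index bindex opsym)
    (ρ : varsort → var → Option (Term var varsort index bindex opsym))
    (Z : Term var varsort index bindex opsym) : Prop :=
  ∃ qX qZ, tmk qX = X ∧ tmk qZ = Z ∧ QPSubst qX (qassign ρ) qZ

/-- Capture-avoiding parallel substitution on terms: `psubst X ρ` is `X[ρ]`. -/
noncomputable def psubst (X : Term var varsort index bindex opsym)
    (ρ : varsort → var → Option (Term var varsort index bindex opsym)) :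
    Term var varsort index bindex opsym :=
  if h : ∃ Z, PSubstRel X ρ Z then h.choose else X

/-- The graph of parallel substitution on abstractions. -/
def PSubstAbsRel (A : Abstr var varsort index bindex opsym)
    (ρ : varsort → var → Option (Term var varsort index bindex opsym))
    (B : Abstr var varsort index bindex opsym) : Prop :=
  ∃ qA qB, amk qA = A ∧ amk qB = B ∧ QPSubstAbs qA (qassign ρ) qB

/-- Capture-avoiding parallel substitution on abstractions. -/
noncomputable def psubstAbs (A : Abstr var varsort index bindex opsym)
    (ρ : varsort → var → Option (Term var varsort index bindex opsym)) :
    Abstr var varsort index bindex opsym :=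
  if h : ∃ B, PSubstAbsRel A ρ B then h.choose else A

/-!
Substituting a variable `y` that is fresh for `X` agrees, up to alpha-equivalence, with swapping
`y` and `x`. So the hypothesis says that `X[y ∧ x]_xs` and `X'[y ∧ x']_xs` are alpha-equivalent,
which is exactly the exists-fresh clause of `AlphaAbs` for `qAbs xs x X` and `qAbs xs x' X'`.

The work is in the facts about quasiterms this needs: on good quasiterms, which have fewer than
`|var|` variables so that fresh ones always exist, alpha-equivalence is an equivalence relation
that is equivariant under swapping and preserves freshness, and every good quasiterm has an
alpha-variant on which substitution is defined. Transitivity and the existence of substitutions are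
proved by an induction in which the hypothesis on the body of an abstraction is available for all
of its swapped variants, so that bound variables can be renamed along the way.
-/

theorem swapVar_eq_swap (z1 z2 : var) : swapVar var z1 z2 = Equiv.swap z1 z2 := by
  funext x
  rw [Equiv.swap_apply_def]
  rfl

theorem swapVarS_swapVarS (zs xs : varsort) (z1 z2 x : var) :
    swapVarS var varsort zs xs z1 z2 (swapVarS var varsort zs xs z1 z2 x) = x := by
  unfold swapVarS
  split_ifs <;> simp [swapVar_eq_swap]

theorem swapVarS_injective (zs xs : varsort) (z1 z2 : var) :
    Function.Injective (swapVarS var varsort zs xs z1 z2) :=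
  Function.LeftInverse.injective (swapVarS_swapVarS zs xs z1 z2)

theorem swapVarS_self (xs : varsort) (z1 z2 x : var) :
    swapVarS var varsort xs xs z1 z2 x = Equiv.swap z1 z2 x := by
  simp [swapVarS, swapVar_eq_swap]

theorem swapVarS_of_ne {zs xs : varsort} {z1 z2 x : var} (h1 : x ≠ z1) (h2 : x ≠ z2) :
    swapVarS var varsort zs xs z1 z2 x = x := by
  unfold swapVarS
  split_ifs <;> simp [swapVar_eq_swap, Equiv.swap_apply_of_ne_of_ne h1 h2]

theorem swapVarS_of_pair_ne {zs xs : varsort} {z1 z2 x : var}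
    (h1 : (xs, x) ≠ (zs, z1)) (h2 : (xs, x) ≠ (zs, z2)) :
    swapVarS var varsort zs xs z1 z2 x = x := by
  unfold swapVarS
  split_ifs with h
  · subst h
    simp_all [swapVar_eq_swap, Equiv.swap_apply_of_ne_of_ne]
  · rfl

theorem pair_swapVarS_eq_iff {zs ys xs : varsort} {z1 z2 y x : var} :
    (ys, swapVarS var varsort zs ys z1 z2 y) = (xs, swapVarS var varsort zs xs z1 z2 x) ↔
      (ys, y) = (xs, x) := by
  constructor
  · rintro h
    obtain ⟨rfl, h⟩ := Prod.mk.inj h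
    rw [swapVarS_injective zs ys z1 z2 h]
  · rintro h
    obtain ⟨rfl, rfl⟩ := Prod.mk.inj h
    rfl

theorem swapVarS_swapVarS_conj (zs as xs : varsort) (z1 z2 a b x : var) :
    swapVarS var varsort zs xs z1 z2 (swapVarS var varsort as xs a b x) =
      swapVarS var varsort as xs (swapVarS var varsort zs as z1 z2 a)
        (swapVarS var varsort zs as z1 z2 b) (swapVarS var varsort zs xs z1 z2 x) := by
  simp only [swapVarS, swapVar_eq_swap]
  split_ifs <;> grind


section Inputs

open Cardinal

variable {α β γ δ ε : Type u}

/-- The paper's `↑R` for a binary relation `R`. -/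
def liftRel (R : β → γ → Prop) (inp : Input α β) (inp' : Input α γ) : Prop :=
  (∀ a, inp a = none ↔ inp' a = none) ∧
    ∀ a b c, inp a = some b → inp' a = some c → R b c

theorem liftP_liftF {P : γ → Prop} {f : β → γ} {inp : Input α β} :
    liftP P (liftF f inp) ↔ liftP (fun b => P (f b)) inp := by
  simp [liftP, liftF]

theorem liftF_liftF (f : γ → δ) (g : β → γ) (inp : Input α β) :
    liftF f (liftF g inp) = liftF (f ∘ g) inp := by
  funext a
  simp [liftF]

theorem liftF_congr {f g : β → γ} {inp : Input α β} (h : liftP (fun b => f b = g b) inp) :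
    liftF f inp = liftF g inp := by
  funext a
  rcases hb : inp a with _ | b
  · simp [liftF, hb]
  · simp [liftF, hb, h a b hb]

theorem liftF_eq_self {f : β → β} {inp : Input α β} (h : liftP (fun b => f b = b) inp) :
    liftF f inp = inp := by
  funext a
  rcases hb : inp a with _ | b
  · simp [liftF, hb]
  · simp [liftF, hb, h a b hb]

theorem liftP_congr {P Q : β → Prop} {inp : Input α β} (h : liftP (fun b => P b ↔ Q b) inp) :
    liftP P inp ↔ liftP Q inp :=
  forall_congr' fun a => forall_congr' fun b => forall_congr' fun hb => h a b hb

theorem idom_liftF (f : β → γ) (inp : Input α β) : idom (liftF f inp) = idom inp := by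
  ext a
  simp [idom, liftF]

theorem smallDom_liftF (f : β → γ) (inp : Input α β) :
    smallDom var (liftF f inp) ↔ smallDom var inp := by
  rw [smallDom, smallDom, idom_liftF]

theorem liftRel.idom_eq {R : β → γ → Prop} {inp : Input α β} {inp' : Input α γ}
    (h : liftRel R inp inp') : idom inp = idom inp' := by
  ext a
  exact not_congr (h.1 a)

theorem liftRel.symm {R : β → γ → Prop} {inp : Input α β} {inp' : Input α γ}
    (h : liftRel R inp inp') : liftRel (fun c b => R b c) inp' inp :=
  ⟨fun a => (h.1 a).symm, fun a c b hc hb => h.2 a b c hb hc⟩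

theorem liftRel.trans {R : β → γ → Prop} {S : γ → δ → Prop} {T : β → δ → Prop}
    {inp : Input α β} {inp' : Input α γ} {inp'' : Input α δ}
    (h₁ : liftRel R inp inp') (h₂ : liftRel S inp' inp'')
    (h : liftP (fun b => ∀ c d, R b c → S c d → T b d) inp) : liftRel T inp inp'' := by
  refine ⟨fun a => (h₁.1 a).trans (h₂.1 a), fun a b d hb hd => ?_⟩
  obtain ⟨c, hc⟩ := Option.ne_none_iff_exists'.1 fun hc => by simp [(h₂.1 a).1 hc] at hd
  exact h a b hb c d (h₁.2 a b c hb hc) (h₂.2 a c d hc hd)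

theorem liftRel.liftP {P : β → Prop} {Q : γ → Prop} {inp : Input α β} {inp' : Input α γ}
    (h : liftRel (fun b c => P b → Q c) inp inp') (hP : liftP P inp) : _root_.liftP Q inp' := by
  intro a c hc
  obtain ⟨b, hb⟩ := Option.ne_none_iff_exists'.1 fun hb => by simp [(h.1 a).1 hb] at hc
  exact h.2 a b c hb hc (hP a b hb)

theorem liftRel.mono {R S : β → γ → Prop} {inp : Input α β} {inp' : Input α γ}
    (h : liftRel R inp inp') (hRS : ∀ b c, R b c → S b c) : liftRel S inp inp' :=
  ⟨h.1, fun a b c hb hc => hRS b c (h.2 a b c hb hc)⟩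

theorem liftRel.liftP_right {R : β → γ → Prop} {Q : γ → Prop} {inp : Input α β}
    {inp' : Input α γ} (h : liftRel R inp inp') (hRQ : ∀ b c, R b c → Q c) :
    _root_.liftP Q inp' :=
  (h.mono fun b c hbc _ => hRQ b c hbc).liftP (P := fun _ => True) fun _ _ _ => trivial

theorem liftRel_liftF_right {R : β → δ → Prop} {g : γ → δ} {inp : Input α β}
    {inp' : Input α γ} :
    liftRel R inp (liftF g inp') ↔ liftRel (fun b c => R b (g c)) inp inp' := by
  refine and_congr (forall_congr' fun a => by simp [liftF]) ⟨fun h a b c hb hc => ?_, ?_⟩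
  · exact h a b (g c) hb (by simp [liftF, hc])
  · intro h a b c hb hc
    simp only [liftF, Option.map_eq_some_iff] at hc
    obtain ⟨c, hc, rfl⟩ := hc
    exact h a b c hb hc

theorem liftRel_liftF {R : γ → δ → Prop} {f : β → γ} {g : ε → δ}
    {inp : Input α β} {inp' : Input α ε} :
    liftRel R (liftF f inp) (liftF g inp') ↔ liftRel (fun b c => R (f b) (g c)) inp inp' := by
  refine and_congr (forall_congr' fun a => by simp [liftF]) ⟨fun h a b c hb hc => ?_, ?_⟩
  · exact h a (f b) (g c) (by simp [liftF, hb]) (by simp [liftF, hc])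
  · intro h a b c hb hc
    simp only [liftF, Option.map_eq_some_iff] at hb hc
    obtain ⟨b, hb, rfl⟩ := hb
    obtain ⟨c, hc, rfl⟩ := hc
    exact h a b c hb hc

theorem liftRel_self {R : β → β → Prop} {inp : Input α β} (h : liftP (fun b => R b b) inp) :
    liftRel R inp inp :=
  ⟨fun _ => Iff.rfl, fun a b _ hb hc => (Option.some.inj (hb.symm.trans hc)) ▸ h a b hb⟩

theorem liftRel_liftF_left {R : γ → β → Prop} {f : β → γ} {inp : Input α β}
    (h : liftP (fun b => R (f b) b) inp) : liftRel R (liftF f inp) inp := by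
  refine ⟨fun a => by simp [liftF], fun a c b hc hb => ?_⟩
  simp only [liftF, hb, Option.map_some, Option.some.injEq] at hc
  exact hc ▸ h a b hb

theorem liftRel_liftF_liftF {R : γ → δ → Prop} {f : β → γ} {g : β → δ}
    {inp : Input α β} (h : liftP (fun b => R (f b) (g b)) inp) :
    liftRel R (liftF f inp) (liftF g inp) := by
  refine ⟨fun a => by simp [liftF], fun a c d hc hd => ?_⟩
  simp only [liftF, Option.map_eq_some_iff] at hc hd
  obtain ⟨b, hb, rfl⟩ := hc
  obtain ⟨b', hb', rfl⟩ := hd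
  cases hb.symm.trans hb'
  exact h a b hb

theorem exists_liftRel {R : β → γ → Prop} {inp : Input α β}
    (h : liftP (fun b => ∃ c, R b c) inp) : ∃ inp', liftRel R inp inp' := by
  choose g hg using h
  refine ⟨fun a => (inp a).pbind fun b hb => some (g a b hb), fun a => ?_,
    fun a b c hb hc => ?_⟩
  · simp [Option.pbind_eq_none_iff]
  · simp only [hb, Option.pbind_some, Option.some.injEq] at hc
    exact hc ▸ hg a b hb

theorem smallDom_of_liftRel {R : β → γ → Prop} {inp : Input α β} {inp' : Input α γ}
    (h : liftRel R inp inp') (hs : smallDom var inp) : smallDom var inp' := by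
  rwa [smallDom, ← h.idom_eq]

theorem mk_iUnion_mem_lt (hreg : (#var).IsRegular) {inp : Input α β} (hs : smallDom var inp)
    {f : β → Set var} (hf : liftP (fun b => #(f b) < #var) inp) :
    #(⋃ a, ⋃ b ∈ inp a, f b : Set var) < #var := by
  have hdom : (⋃ a, ⋃ b ∈ inp a, f b) = ⋃ a ∈ idom inp, ⋃ b ∈ inp a, f b := by
    ext v
    simp only [Set.mem_iUnion, Option.mem_def, idom, Set.mem_ofPred_eq]
    exact ⟨fun ⟨a, b, hb, hv⟩ => ⟨a, by simp [hb], b, hb, hv⟩,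
      fun ⟨a, _, h⟩ => ⟨a, h⟩⟩
  rw [hdom, Cardinal.card_biUnion_lt_iff_forall_of_isRegular hreg hs]
  intro a _
  rcases hb : inp a with _ | b
  · simpa using hreg.pos
  · simpa using hf a b hb

end Inputs

section Renaming

theorem qterm_qabs_ind {P : QTerm var varsort index bindex opsym → Prop}
    {Q : QAbs var varsort index bindex opsym → Prop}
    (hvar : ∀ xs x, P (.qVar xs x))
    (hop : ∀ d inp binp, liftP P inp → liftP Q binp → P (.qOp d inp binp))
    (habs : ∀ xs x X, P X → Q (.qAbs xs x X)) :
    (∀ X, P X) ∧ ∀ A, Q A := by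
  have hP : ∀ X, P X := fun X =>
    QTerm.rec (motive_1 := P) (motive_2 := Q)
      (motive_3 := fun o => ∀ X, o = some X → P X)
      (motive_4 := fun o => ∀ A, o = some A → Q A)
      hvar (fun d inp binp ih ihb => hop d inp binp ih ihb) habs
      (fun _ h => by cases h) (fun _ ih _ h => by cases h; exact ih)
      (fun _ h => by cases h) (fun _ ih _ h => by cases h; exact ih) X
  exact ⟨hP, fun | .qAbs xs x X => habs xs x X (hP X)⟩

/-- Raw renaming: binding occurrences are renamed too, with no capture avoidance. -/
noncomputable def qRename (f : varsort → var → var) :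
    QTerm var varsort index bindex opsym → QTerm var varsort index bindex opsym :=
  QTerm.rec (motive_1 := fun _ => QTerm var varsort index bindex opsym)
    (motive_2 := fun _ => QAbs var varsort index bindex opsym)
    (motive_3 := fun _ => Option (QTerm var varsort index bindex opsym))
    (motive_4 := fun _ => Option (QAbs var varsort index bindex opsym))
    (fun xs x => .qVar xs (f xs x))
    (fun d _ _ rinp rbinp => .qOp d rinp rbinp)
    (fun xs x _ rX => .qAbs xs (f xs x) rX)
    none (fun _ r => some r) none (fun _ r => some r)

noncomputable def qRenameAbs (f : varsort → var → var) :
    QAbs var varsort index bindex opsym → QAbs var varsort index bindex opsym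
  | .qAbs xs x X => .qAbs xs (f xs x) (qRename f X)

variable (f g : varsort → var → var)

@[simp] theorem qRename_qVar (xs : varsort) (x : var) :
    qRename f (.qVar xs x : QTerm var varsort index bindex opsym) = .qVar xs (f xs x) := rfl

@[simp] theorem qRename_qOp (d : opsym) (inp : Input index (QTerm var varsort index bindex opsym))
    (binp : Input bindex (QAbs var varsort index bindex opsym)) :
    qRename f (.qOp d inp binp) = .qOp d (liftF (qRename f) inp) (liftF (qRenameAbs f) binp) := by
  change QTerm.qOp d _ _ = _
  congr 1
  · funext i
    change _ = (inp i).map _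
    cases inp i <;> rfl
  · funext j
    change _ = (binp j).map _
    rcases binp j with _ | ⟨_, _, _⟩ <;> rfl

@[simp] theorem qRenameAbs_qAbs (xs : varsort) (x : var)
    (X : QTerm var varsort index bindex opsym) :
    qRenameAbs f (.qAbs xs x X) = .qAbs xs (f xs x) (qRename f X) := rfl

theorem qRename_qRename_and :
    (∀ X : QTerm var varsort index bindex opsym,
      qRename f (qRename g X) = qRename (fun s => f s ∘ g s) X) ∧
    ∀ A : QAbs var varsort index bindex opsym,
      qRenameAbs f (qRenameAbs g A) = qRenameAbs (fun s => f s ∘ g s) A := by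
  refine qterm_qabs_ind (fun _ _ => rfl) (fun d inp binp ih ihb => ?_)
    (fun xs x X ih => by simp [ih])
  simp only [qRename_qOp, liftF_liftF]
  exact congrArg₂ _ (liftF_congr ih) (liftF_congr ihb)

theorem qRename_qRename (X : QTerm var varsort index bindex opsym) :
    qRename f (qRename g X) = qRename (fun s => f s ∘ g s) X :=
  (qRename_qRename_and f g).1 X

theorem qRename_id_and :
    (∀ X : QTerm var varsort index bindex opsym, qRename (fun _ => id) X = X) ∧
    ∀ A : QAbs var varsort index bindex opsym, qRenameAbs (fun _ => id) A = A := by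
  refine qterm_qabs_ind (fun _ _ => rfl) (fun d inp binp ih ihb => ?_)
    (fun xs x X ih => by simp [ih])
  rw [qRename_qOp, liftF_eq_self ih, liftF_eq_self ihb]

theorem qRename_id (X : QTerm var varsort index bindex opsym) : qRename (fun _ => id) X = X :=
  qRename_id_and.1 X

end Renaming

section Swapping

variable (z1 z2 : var) (zs : varsort)

theorem qSwap_eq_qRename :
    (qSwap z1 z2 zs : QTerm var varsort index bindex opsym → _) =
      qRename fun xs => swapVarS var varsort zs xs z1 z2 := rfl

theorem qSwapAbs_eq_qRenameAbs :
    (qSwapAbs z1 z2 zs : QAbs var varsort index bindex opsym → _) =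
      qRenameAbs fun xs => swapVarS var varsort zs xs z1 z2 := by
  funext A
  cases A
  rfl

@[simp] theorem qSwap_qVar (xs : varsort) (x : var) :
    qSwap z1 z2 zs (.qVar xs x : QTerm var varsort index bindex opsym) =
      .qVar xs (swapVarS var varsort zs xs z1 z2 x) := rfl

@[simp] theorem qSwap_qOp (d : opsym) (inp : Input index (QTerm var varsort index bindex opsym))
    (binp : Input bindex (QAbs var varsort index bindex opsym)) :
    qSwap z1 z2 zs (.qOp d inp binp) =
      .qOp d (liftF (qSwap z1 z2 zs) inp) (liftF (qSwapAbs z1 z2 zs) binp) := by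
  rw [qSwap_eq_qRename, qSwapAbs_eq_qRenameAbs, qRename_qOp]

@[simp] theorem qSwapAbs_qAbs (xs : varsort) (x : var)
    (X : QTerm var varsort index bindex opsym) :
    qSwapAbs z1 z2 zs (.qAbs xs x X) =
      .qAbs xs (swapVarS var varsort zs xs z1 z2 x) (qSwap z1 z2 zs X) := rfl

@[simp] theorem qSwap_qSwap (X : QTerm var varsort index bindex opsym) :
    qSwap z1 z2 zs (qSwap z1 z2 zs X) = X := by
  rw [qSwap_eq_qRename, qRename_qRename]
  convert qRename_id X using 2
  funext s x
  exact swapVarS_swapVarS zs s z1 z2 x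

theorem qSwap_qSwap_conj (a b : var) (as : varsort) (X : QTerm var varsort index bindex opsym) :
    qSwap z1 z2 zs (qSwap a b as X) =
      qSwap (swapVarS var varsort zs as z1 z2 a) (swapVarS var varsort zs as z1 z2 b) as
        (qSwap z1 z2 zs X) := by
  simp only [qSwap_eq_qRename, qRename_qRename]
  congr
  funext s x
  exact swapVarS_swapVarS_conj zs as s z1 z2 a b x

theorem qSwap_qSwap_of_ne {u w y : var} (hyu : y ≠ u) (hyw : y ≠ w)
    (X : QTerm var varsort index bindex opsym) :
    qSwap u w zs (qSwap w y zs X) = qSwap u y zs (qSwap u w zs X) := by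
  rw [qSwap_qSwap_conj, swapVarS_self, swapVarS_self, Equiv.swap_apply_right,
    Equiv.swap_apply_of_ne_of_ne hyu hyw]

end Swapping

/-- Structural induction strengthened so that bound variables can be renamed in the abstraction
case. It holds because structural induction goes through for all renamings `qRename f X` at once. -/
theorem qterm_qabs_ind_qSwap {P : QTerm var varsort index bindex opsym → Prop}
    {Q : QAbs var varsort index bindex opsym → Prop}
    (hvar : ∀ xs x, P (.qVar xs x))
    (hop : ∀ d inp binp, liftP P inp → liftP Q binp → P (.qOp d inp binp))
    (habs : ∀ xs x X, (∀ z1 z2 zs, P (qSwap z1 z2 zs X)) → Q (.qAbs xs x X)) :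
    (∀ X, P X) ∧ ∀ A, Q A := by
  have key : (∀ X : QTerm var varsort index bindex opsym, ∀ f, P (qRename f X)) ∧
      ∀ A : QAbs var varsort index bindex opsym, ∀ f, Q (qRenameAbs f A) := by
    refine qterm_qabs_ind (fun xs x f => hvar _ _) (fun d inp binp ih ihb f => ?_)
      (fun xs x X ih f => habs _ _ _ fun z1 z2 zs => ?_)
    · rw [qRename_qOp]
      exact hop _ _ _ (liftP_liftF.2 fun i X h => ih i X h f)
        (liftP_liftF.2 fun j A h => ihb j A h f)
    · rw [qSwap_eq_qRename, qRename_qRename]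
      exact ih _
  refine ⟨fun X => ?_, fun A => ?_⟩
  · simpa only [qRename_id] using key.1 X fun _ => id
  · simpa only [(qRename_id_and).2 A] using key.2 A fun _ => id

section FreshGood

@[simp] theorem qFresh_qVar_iff {ys xs : varsort} {y x : var} :
    QFresh ys y (.qVar xs x : QTerm var varsort index bindex opsym) ↔ (ys, y) ≠ (xs, x) :=
  ⟨fun | .qVar h => h, .qVar⟩

@[simp] theorem qFresh_qOp_iff {ys : varsort} {y : var} {d : opsym}
    {inp : Input index (QTerm var varsort index bindex opsym)}
    {binp : Input bindex (QAbs var varsort index bindex opsym)} :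
    QFresh ys y (.qOp d inp binp) ↔ liftP (QFresh ys y) inp ∧ liftP (QFreshAbs ys y) binp :=
  ⟨fun | .qOp h hb => ⟨h, hb⟩, fun ⟨h, hb⟩ => .qOp h hb⟩

@[simp] theorem qFreshAbs_qAbs_iff {ys xs : varsort} {y x : var}
    {X : QTerm var varsort index bindex opsym} :
    QFreshAbs ys y (.qAbs xs x X) ↔ (ys, y) = (xs, x) ∨ QFresh ys y X := by
  refine ⟨fun | .qAbs_bound => .inl rfl | .qAbs_body h => .inr h, ?_⟩
  rintro (h | h)
  · obtain ⟨rfl, rfl⟩ := Prod.mk.inj h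
    exact .qAbs_bound
  · exact .qAbs_body h

@[simp] theorem qGood_qOp_iff {d : opsym} {inp : Input index (QTerm var varsort index bindex opsym)}
    {binp : Input bindex (QAbs var varsort index bindex opsym)} :
    QGood (.qOp d inp binp) ↔
      liftP QGood inp ∧ liftP QGoodAbs binp ∧ smallDom var inp ∧ smallDom var binp :=
  ⟨fun | .qOp h hb hs hbs => ⟨h, hb, hs, hbs⟩, fun ⟨h, hb, hs, hbs⟩ => .qOp h hb hs hbs⟩

@[simp] theorem qGoodAbs_qAbs_iff {xs : varsort} {x : var}
    {X : QTerm var varsort index bindex opsym} : QGoodAbs (.qAbs xs x X) ↔ QGood X :=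
  ⟨fun | .qAbs h => h, .qAbs⟩

theorem qGood_qRename (f : varsort → var → var) {X : QTerm var varsort index bindex opsym} :
    QGood (qRename f X) ↔ QGood X := by
  refine (qterm_qabs_ind (P := fun X => QGood (qRename f X) ↔ QGood X)
    (Q := fun A => QGoodAbs (qRenameAbs f A) ↔ QGoodAbs A) (fun _ _ => by simp [QGood.qVar])
    (fun d inp binp ih ihb => ?_) (fun xs x X ih => by simpa using ih)).1 X
  simp only [qRename_qOp, qGood_qOp_iff, liftP_liftF, smallDom_liftF, liftP_congr ih,
    liftP_congr ihb]

@[simp] theorem qGood_qSwap {z1 z2 : var} {zs : varsort}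
    {X : QTerm var varsort index bindex opsym} :
    QGood (qSwap z1 z2 zs X) ↔ QGood X :=
  qGood_qRename _

theorem qFresh_qSwap_swapVarS_iff {ys zs : varsort} {v z1 z2 : var}
    {X : QTerm var varsort index bindex opsym} :
    QFresh ys (swapVarS var varsort zs ys z1 z2 v) (qSwap z1 z2 zs X) ↔ QFresh ys v X := by
  refine (qterm_qabs_ind
    (P := fun X => ∀ ys v,
      QFresh ys (swapVarS var varsort zs ys z1 z2 v) (qSwap z1 z2 zs X) ↔ QFresh ys v X)
    (Q := fun A => ∀ ys v,
      QFreshAbs ys (swapVarS var varsort zs ys z1 z2 v) (qSwapAbs z1 z2 zs A) ↔ QFreshAbs ys v A)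
    (fun _ _ _ _ => by rw [qSwap_qVar, qFresh_qVar_iff, qFresh_qVar_iff, Ne, pair_swapVarS_eq_iff])
    (fun d inp binp ih ihb ys v => ?_)
    (fun xs x X ih ys v => by
      rw [qSwapAbs_qAbs, qFreshAbs_qAbs_iff, qFreshAbs_qAbs_iff, pair_swapVarS_eq_iff, ih])).1
    X ys v
  simp only [qSwap_qOp, qFresh_qOp_iff, liftP_liftF, liftP_congr fun i X h => ih i X h ys v,
    liftP_congr fun j A h => ihb j A h ys v]

theorem qFresh_qSwap_iff {ys zs : varsort} {v z1 z2 : var}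
    {X : QTerm var varsort index bindex opsym} :
    QFresh ys v (qSwap z1 z2 zs X) ↔ QFresh ys (swapVarS var varsort zs ys z1 z2 v) X := by
  have := qFresh_qSwap_swapVarS_iff (ys := ys) (v := v) (z1 := z1) (z2 := z2) (zs := zs)
    (X := qSwap z1 z2 zs X)
  rwa [qSwap_qSwap, Iff.comm] at this

theorem qFreshAbs_qAbs_iff_of_qFresh {ys xs : varsort} {v x y : var}
    {X : QTerm var varsort index bindex opsym} (hy : QFresh xs y X) (hyx : y ≠ x) :
    QFreshAbs ys v (.qAbs xs x X) ↔ (ys, v) = (xs, y) ∨ QFresh ys v (qSwap y x xs X) := by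
  rw [qFreshAbs_qAbs_iff, qFresh_qSwap_iff]
  by_cases hvy : (ys, v) = (xs, y)
  · obtain ⟨rfl, rfl⟩ := Prod.mk.inj hvy
    simp [hy]
  by_cases hvx : (ys, v) = (xs, x)
  · obtain ⟨rfl, rfl⟩ := Prod.mk.inj hvx
    simp [swapVarS_self, hy]
  · simp [hvy, hvx, swapVarS_of_pair_ne hvy hvx]

end FreshGood

section Vars

open Cardinal

/-- All variables occurring in a quasiterm, free or bound, of any sort. -/
noncomputable def qVars : QTerm var varsort index bindex opsym → Set var :=
  QTerm.rec (motive_1 := fun _ => Set var) (motive_2 := fun _ => Set var)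
    (motive_3 := fun _ => Set var) (motive_4 := fun _ => Set var)
    (fun _ x => {x})
    (fun _ _ _ rinp rbinp => (⋃ i, rinp i) ∪ ⋃ j, rbinp j)
    (fun _ x _ rX => insert x rX)
    ∅ (fun _ r => r) ∅ (fun _ r => r)

noncomputable def qVarsAbs : QAbs var varsort index bindex opsym → Set var
  | .qAbs _ x X => insert x (qVars X)

@[simp] theorem qVars_qVar (xs : varsort) (x : var) :
    qVars (.qVar xs x : QTerm var varsort index bindex opsym) = {x} := rfl

@[simp] theorem qVars_qOp (d : opsym) (inp : Input index (QTerm var varsort index bindex opsym))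
    (binp : Input bindex (QAbs var varsort index bindex opsym)) :
    qVars (.qOp d inp binp) =
      (⋃ i, ⋃ X ∈ inp i, qVars X) ∪ ⋃ j, ⋃ A ∈ binp j, qVarsAbs A := by
  change (⋃ _, _) ∪ (⋃ _, _) = _
  congr 1
  · refine Set.iUnion_congr fun i => ?_
    cases inp i <;> simp [qVars]
  · refine Set.iUnion_congr fun j => ?_
    rcases binp j with _ | ⟨_, _, _⟩ <;> simp [qVars, qVarsAbs]

@[simp] theorem qVarsAbs_qAbs (xs : varsort) (x : var) (X : QTerm var varsort index bindex opsym) :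
    qVarsAbs (.qAbs xs x X) = insert x (qVars X) := rfl

theorem qFresh_of_notMem_qVars {ys : varsort} {v : var} {X : QTerm var varsort index bindex opsym}
    (h : v ∉ qVars X) : QFresh ys v X := by
  refine (qterm_qabs_ind (P := fun X => v ∉ qVars X → QFresh ys v X)
    (Q := fun A => v ∉ qVarsAbs A → QFreshAbs ys v A) (fun xs x hv => ?_)
    (fun d inp binp ih ihb hv => ?_) (fun xs x X ih hv => ?_)).1 X h
  · simp only [qVars_qVar, Set.mem_singleton_iff] at hv
    simp [hv]
  · simp only [qVars_qOp, Set.mem_union, Set.mem_iUnion, not_or, not_exists] at hv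
    exact qFresh_qOp_iff.2 ⟨fun i X hX => ih i X hX (hv.1 i X hX),
      fun j A hA => ihb j A hA (hv.2 j A hA)⟩
  · simp only [qVarsAbs_qAbs, Set.mem_insert_iff, not_or] at hv
    exact .qAbs_body (ih hv.2)

theorem mk_lt_of_finite {α : Type u} (hinf : ℵ₀ ≤ #var) {S : Set α} (hS : S.Finite) :
    #S < #var :=
  (Cardinal.lt_aleph0_iff_set_finite.2 hS).trans_le hinf

theorem mk_union_lt (hinf : ℵ₀ ≤ #var) {S T : Set var} (hS : #S < #var) (hT : #T < #var) :
    #(S ∪ T : Set var) < #var :=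
  (Cardinal.mk_union_le S T).trans_lt (Cardinal.add_lt_of_lt hinf hS hT)

theorem mk_qVars_lt (hreg : (#var).IsRegular)
    {X : QTerm var varsort index bindex opsym} (hX : QGood X) : #(qVars X) < #var := by
  refine (qterm_qabs_ind (P := fun X => QGood X → #(qVars X) < #var)
    (Q := fun A => QGoodAbs A → #(qVarsAbs A) < #var)
    (fun xs x _ => mk_lt_of_finite hreg.aleph0_le (Set.finite_singleton x))
    (fun d inp binp ih ihb hg => ?_) (fun xs x X ih hg => ?_)).1 X hX
  · obtain ⟨hg, hgb, hs, hbs⟩ := qGood_qOp_iff.1 hg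
    rw [qVars_qOp]
    exact mk_union_lt hreg.aleph0_le (mk_iUnion_mem_lt hreg hs fun i X h => ih i X h (hg i X h))
      (mk_iUnion_mem_lt hreg hbs fun j A h => ihb j A h (hgb j A h))
  · rw [qVarsAbs_qAbs, Set.insert_eq]
    exact mk_union_lt hreg.aleph0_le (mk_lt_of_finite hreg.aleph0_le (Set.finite_singleton x))
      (ih (qGoodAbs_qAbs_iff.1 hg))

theorem exists_qFresh (hreg : (#var).IsRegular)
    (Xs : List (QTerm var varsort index bindex opsym)) (hXs : ∀ X ∈ Xs, QGood X)
    (F : Finset var) : ∃ u ∉ F, ∀ X ∈ Xs, ∀ ys, QFresh ys u X := by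
  let S : Set var := ↑F ∪ ⋃ X ∈ {X | X ∈ Xs}, qVars X
  have hS : #S < #var := by
    refine mk_union_lt hreg.aleph0_le (mk_lt_of_finite hreg.aleph0_le F.finite_toSet) ?_
    rw [Cardinal.card_biUnion_lt_iff_forall_of_isRegular hreg]
    · exact fun X hX => mk_qVars_lt hreg (hXs X hX)
    · exact mk_lt_of_finite hreg.aleph0_le Xs.finite_toSet
  obtain ⟨u, hu⟩ := (Set.ne_univ_iff_exists_notMem S).1 fun h => by
    rw [h, Cardinal.mk_univ] at hS
    exact hS.false
  simp only [S, Set.mem_union, Finset.mem_coe, Set.mem_iUnion, not_or, not_exists] at hu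
  exact ⟨u, hu.1, fun X hX ys => qFresh_of_notMem_qVars (hu.2 X hX)⟩

end Vars

section AlphaBasic

theorem alpha_alphaAbs_ind
    {R : QTerm var varsort index bindex opsym → QTerm var varsort index bindex opsym → Prop}
    {S : QAbs var varsort index bindex opsym → QAbs var varsort index bindex opsym → Prop}
    (hvar : ∀ xs x, R (.qVar xs x) (.qVar xs x))
    (hop : ∀ d inp binp inp' binp', liftRel R inp inp' → liftRel S binp binp' →
      R (.qOp d inp binp) (.qOp d inp' binp'))
    (habs : ∀ xs x x' X X' y, y ∉ ({x, x'} : Set var) → QFresh xs y X → QFresh xs y X' →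
      R (qSwap y x xs X) (qSwap y x' xs X') → S (.qAbs xs x X) (.qAbs xs x' X')) :
    (∀ {X Y}, Alpha X Y → R X Y) ∧ ∀ {A B}, AlphaAbs A B → S A B :=
  ⟨fun h => Alpha.rec (motive_1 := fun X Y _ => R X Y) (motive_2 := fun A B _ => S A B)
      (fun {_ _} => hvar _ _)
      (fun {_ _ _ _ _} hn _ hbn _ ih ihb => hop _ _ _ _ _ ⟨hn, ih⟩ ⟨hbn, ihb⟩)
      (fun {_ _ _ _ _ _} hy hX hX' _ ih => habs _ _ _ _ _ _ hy hX hX' ih) h,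
    fun h => AlphaAbs.rec (motive_1 := fun X Y _ => R X Y) (motive_2 := fun A B _ => S A B)
      (fun {_ _} => hvar _ _)
      (fun {_ _ _ _ _} hn _ hbn _ ih ihb => hop _ _ _ _ _ ⟨hn, ih⟩ ⟨hbn, ihb⟩)
      (fun {_ _ _ _ _ _} hy hX hX' _ ih => habs _ _ _ _ _ _ hy hX hX' ih) h⟩

theorem alpha_qSwap_and (z1 z2 : var) (zs : varsort) :
    (∀ {X Y : QTerm var varsort index bindex opsym},
      Alpha X Y → Alpha (qSwap z1 z2 zs X) (qSwap z1 z2 zs Y)) ∧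
    ∀ {A B : QAbs var varsort index bindex opsym},
      AlphaAbs A B → AlphaAbs (qSwapAbs z1 z2 zs A) (qSwapAbs z1 z2 zs B) := by
  refine alpha_alphaAbs_ind (fun _ _ => .qVar) (fun d inp binp inp' binp' h hb => ?_)
    (fun xs x x' X X' y hy hX hX' h => ?_)
  · rw [qSwap_qOp, qSwap_qOp]
    have h' := liftRel_liftF.2 h
    have hb' := liftRel_liftF.2 hb
    exact .qOp h'.1 h'.2 hb'.1 hb'.2
  · rw [qSwapAbs_qAbs, qSwapAbs_qAbs]
    refine .qAbs (y := swapVarS var varsort zs xs z1 z2 y) ?_ (qFresh_qSwap_swapVarS_iff.2 hX)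
      (qFresh_qSwap_swapVarS_iff.2 hX') ?_
    · simpa only [Set.mem_insert_iff, Set.mem_singleton_iff, (swapVarS_injective _ _ _ _).eq_iff]
        using hy
    · rwa [← qSwap_qSwap_conj, ← qSwap_qSwap_conj]

theorem Alpha.qSwap {X Y : QTerm var varsort index bindex opsym} (h : Alpha X Y) (z1 z2 : var)
    (zs : varsort) : Alpha (qSwap z1 z2 zs X) (qSwap z1 z2 zs Y) :=
  (alpha_qSwap_and z1 z2 zs).1 h

theorem alpha_symm_and :
    (∀ {X Y : QTerm var varsort index bindex opsym}, Alpha X Y → Alpha Y X) ∧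
    ∀ {A B : QAbs var varsort index bindex opsym}, AlphaAbs A B → AlphaAbs B A := by
  refine alpha_alphaAbs_ind (fun _ _ => .qVar) (fun d inp binp inp' binp' h hb => ?_)
    (fun xs x x' X X' y hy hX hX' h => .qAbs ?_ hX' hX h)
  · exact .qOp h.symm.1 h.symm.2 hb.symm.1 hb.symm.2
  · simp only [Set.mem_insert_iff, Set.mem_singleton_iff] at hy ⊢
    tauto

theorem Alpha.symm {X Y : QTerm var varsort index bindex opsym} (h : Alpha X Y) : Alpha Y X :=
  alpha_symm_and.1 h

theorem qGood_of_alpha_and :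
    (∀ {X Y : QTerm var varsort index bindex opsym}, Alpha X Y → QGood X → QGood Y) ∧
    ∀ {A B : QAbs var varsort index bindex opsym},
      AlphaAbs A B → QGoodAbs A → QGoodAbs B := by
  refine alpha_alphaAbs_ind (fun _ _ h => h) (fun d inp binp inp' binp' h hb hg => ?_)
    (fun xs x x' X X' y _ _ _ h hg => ?_)
  · obtain ⟨hg, hgb, hs, hbs⟩ := qGood_qOp_iff.1 hg
    exact .qOp (h.liftP hg) (hb.liftP hgb) (smallDom_of_liftRel h hs) (smallDom_of_liftRel hb hbs)
  · simpa using h (qGood_qSwap.2 (qGoodAbs_qAbs_iff.1 hg))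

theorem Alpha.qGood {X Y : QTerm var varsort index bindex opsym} (h : Alpha X Y) (hX : QGood X) :
    QGood Y :=
  qGood_of_alpha_and.1 h hX

theorem qFresh_of_alpha_and (ys : varsort) (v : var) :
    (∀ {X Y : QTerm var varsort index bindex opsym},
      Alpha X Y → QFresh ys v X → QFresh ys v Y) ∧
    ∀ {A B : QAbs var varsort index bindex opsym},
      AlphaAbs A B → QFreshAbs ys v A → QFreshAbs ys v B := by
  refine alpha_alphaAbs_ind (fun _ _ h => h) (fun d inp binp inp' binp' h hb hf => ?_)
    (fun xs x x' X X' y hy hX hX' h hf => ?_)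
  · obtain ⟨hf, hfb⟩ := qFresh_qOp_iff.1 hf
    exact .qOp (h.liftP hf) (hb.liftP hfb)
  · simp only [Set.mem_insert_iff, Set.mem_singleton_iff, not_or] at hy
    rw [qFreshAbs_qAbs_iff_of_qFresh hX hy.1] at hf
    rw [qFreshAbs_qAbs_iff_of_qFresh hX' hy.2]
    exact hf.imp_right h

theorem Alpha.qFresh {X Y : QTerm var varsort index bindex opsym} (h : Alpha X Y) {ys : varsort}
    {v : var} (hX : QFresh ys v X) : QFresh ys v Y :=
  (qFresh_of_alpha_and ys v).1 h hX

end AlphaBasic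

section AlphaEquivalence

open Cardinal

theorem alpha_qSwap_of_qFresh_and (hreg : (#var).IsRegular) :
    (∀ X : QTerm var varsort index bindex opsym, QGood X → ∀ z1 z2 zs,
      QFresh zs z1 X → QFresh zs z2 X → Alpha (qSwap z1 z2 zs X) X) ∧
    ∀ A : QAbs var varsort index bindex opsym, QGoodAbs A → ∀ z1 z2 zs,
      QFreshAbs zs z1 A → QFreshAbs zs z2 A → AlphaAbs (qSwapAbs z1 z2 zs A) A := by
  refine qterm_qabs_ind_qSwap (fun xs x _ z1 z2 zs h1 h2 => ?_)
    (fun d inp binp ih ihb hg z1 z2 zs h1 h2 => ?_) (fun xs b X ih hg z1 z2 zs h1 h2 => ?_)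
  · rw [qFresh_qVar_iff] at h1 h2
    rw [qSwap_qVar, swapVarS_of_pair_ne (Ne.symm h1) (Ne.symm h2)]
    exact .qVar
  · obtain ⟨hg, hgb, -, -⟩ := qGood_qOp_iff.1 hg
    obtain ⟨h1, h1b⟩ := qFresh_qOp_iff.1 h1
    obtain ⟨h2, h2b⟩ := qFresh_qOp_iff.1 h2
    have h := liftRel_liftF_left (R := Alpha) (f := qSwap z1 z2 zs) (inp := inp)
      fun i X hX => ih i X hX (hg i X hX) z1 z2 zs (h1 i X hX) (h2 i X hX)
    have hb := liftRel_liftF_left (R := AlphaAbs) (f := qSwapAbs z1 z2 zs) (inp := binp)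
      fun j A hA => ihb j A hA (hgb j A hA) z1 z2 zs (h1b j A hA) (h2b j A hA)
    rw [qSwap_qOp]
    exact .qOp h.1 h.2 hb.1 hb.2
  · have hX := qGoodAbs_qAbs_iff.1 hg
    obtain ⟨u, hu, hfr⟩ := exists_qFresh hreg [X] (by simpa using hX)
      {z1, z2, b, swapVarS var varsort zs xs z1 z2 b}
    simp only [Finset.mem_insert, Finset.mem_singleton, not_or] at hu
    obtain ⟨hu1, hu2, hub, hub'⟩ := hu
    have huX := hfr X (by simp) xs
    have hσu : swapVarS var varsort zs xs z1 z2 u = u := swapVarS_of_ne hu1 hu2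
    have hbody :
        ∀ z, QFreshAbs zs z (.qAbs xs b X) → z ≠ u → QFresh zs z (qSwap u b xs X) :=
      fun z hz hzu => ((qFreshAbs_qAbs_iff_of_qFresh huX hub).1 hz).resolve_left
        fun h => hzu (Prod.mk.inj h).2
    refine .qAbs (y := u) (by simp [hub, hub']) (qFresh_qSwap_iff.2 (by rwa [hσu])) huX ?_
    rw [← hσu, ← qSwap_qSwap_conj, hσu]
    exact ih u b xs (qGood_qSwap.2 hX) z1 z2 zs (hbody z1 h1 (Ne.symm hu1))
      (hbody z2 h2 (Ne.symm hu2))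

theorem alpha_qSwap_of_qFresh (hreg : (#var).IsRegular)
    {X : QTerm var varsort index bindex opsym} (hX : QGood X) {z1 z2 : var} {zs : varsort}
    (h1 : QFresh zs z1 X) (h2 : QFresh zs z2 X) : Alpha (qSwap z1 z2 zs X) X :=
  (alpha_qSwap_of_qFresh_and hreg).1 X hX z1 z2 zs h1 h2

theorem alpha_refl (hreg : (#var).IsRegular) {X : QTerm var varsort index bindex opsym}
    (hX : QGood X) : Alpha X X := by
  refine (qterm_qabs_ind (P := fun X => QGood X → Alpha X X)
    (Q := fun A => QGoodAbs A → AlphaAbs A A)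
    (fun _ _ _ => .qVar) (fun d inp binp ih ihb hg => ?_) (fun xs x X ih hg => ?_)).1 X hX
  · obtain ⟨hg, hgb, -, -⟩ := qGood_qOp_iff.1 hg
    have h := liftRel_self (R := Alpha) fun i X hX => ih i X hX (hg i X hX)
    have hb := liftRel_self (R := AlphaAbs) fun j A hA => ihb j A hA (hgb j A hA)
    exact .qOp h.1 h.2 hb.1 hb.2
  · have hX := qGoodAbs_qAbs_iff.1 hg
    obtain ⟨u, hu, hfr⟩ := exists_qFresh hreg [X] (by simpa using hX) {x}
    have huX := hfr X (by simp) xs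
    exact .qAbs (by simpa using hu) huX huX ((ih hX).qSwap u x xs)

theorem alphaAbs_qAbs_of_alpha (hreg : (#var).IsRegular) {xs : varsort} {x : var}
    {X Y : QTerm var varsort index bindex opsym} (hX : QGood X) (h : Alpha X Y) :
    AlphaAbs (.qAbs xs x X) (.qAbs xs x Y) := by
  obtain ⟨u, hu, huXY⟩ := exists_qFresh hreg [X, Y] (by simp [hX, h.qGood hX]) {x}
  exact .qAbs (by simpa using hu) (huXY X (by simp) xs) (huXY Y (by simp) xs) (h.qSwap u x xs)

/-- In the exists-fresh clause of `AlphaAbs`, the witness `w` may be replaced by any other fresh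
`u`, as seen by any predicate `R` closed under alpha-equivalence. -/
theorem qSwap_transport (hreg : (#var).IsRegular)
    {R : QTerm var varsort index bindex opsym → Prop}
    (hR : ∀ W W', R W → Alpha W W' → R W') {xs : varsort} {y z w u : var}
    {Y Z : QTerm var varsort index bindex opsym} (hY : QGood Y) (hZ : QGood Z)
    (hw : w ∉ ({y, z} : Set var)) (hwY : QFresh xs w Y) (hwZ : QFresh xs w Z)
    (h : Alpha (qSwap w y xs Y) (qSwap w z xs Z))
    (hu : u ∉ ({y, z} : Set var)) (huY : QFresh xs u Y) (huZ : QFresh xs u Z)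
    (hRY : R (qSwap u y xs Y)) : R (qSwap u z xs Z) := by
  simp only [Set.mem_insert_iff, Set.mem_singleton_iff, not_or] at hw hu
  have hRY' : R (qSwap u w xs (qSwap w y xs Y)) := by
    rw [qSwap_qSwap_of_ne _ (Ne.symm hu.1) (Ne.symm hw.1)]
    exact hR _ _ hRY ((alpha_qSwap_of_qFresh hreg hY huY hwY).qSwap u y xs).symm
  have hRZ : R (qSwap u z xs (qSwap u w xs Z)) := by
    rw [← qSwap_qSwap_of_ne _ (Ne.symm hu.2) (Ne.symm hw.2)]
    exact hR _ _ hRY' (h.qSwap u w xs)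
  exact hR _ _ hRZ ((alpha_qSwap_of_qFresh hreg hZ huZ hwZ).qSwap u z xs)

theorem alpha_trans_and (hreg : (#var).IsRegular) :
    (∀ X : QTerm var varsort index bindex opsym, QGood X → ∀ Y Z,
      Alpha X Y → Alpha Y Z → Alpha X Z) ∧
    ∀ A : QAbs var varsort index bindex opsym, QGoodAbs A → ∀ B C,
      AlphaAbs A B → AlphaAbs B C → AlphaAbs A C := by
  refine qterm_qabs_ind_qSwap (fun xs x _ Y Z h1 h2 => ?_)
    (fun d inp binp ih ihb hg Y Z h1 h2 => ?_) (fun xs b X ih hg B C h1 h2 => ?_)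
  · cases h1
    exact h2
  · obtain ⟨hg, hgb, -, -⟩ := qGood_qOp_iff.1 hg
    cases h1 with | qOp hn1 hc1 hbn1 hbc1 =>
    cases h2 with | qOp hn2 hc2 hbn2 hbc2 =>
    have h := liftRel.trans (T := Alpha) ⟨hn1, hc1⟩ ⟨hn2, hc2⟩
      fun i X hX => ih i X hX (hg i X hX)
    have hb := liftRel.trans (T := AlphaAbs) ⟨hbn1, hbc1⟩ ⟨hbn2, hbc2⟩
      fun j A hA => ihb j A hA (hgb j A hA)
    exact .qOp h.1 h.2 hb.1 hb.2
  · have hX := qGoodAbs_qAbs_iff.1 hg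
    cases h1 with | @qAbs _ _ y _ Y u1 hy1 hu1X hu1Y h1 =>
    cases h2 with | @qAbs _ _ z _ Z u2 hz2 hu2Y hu2Z h2 =>
    have hY : QGood Y := qGood_qSwap.1 (h1.qGood (qGood_qSwap.2 hX))
    have hZ : QGood Z := qGood_qSwap.1 (h2.qGood (qGood_qSwap.2 hY))
    obtain ⟨u, hu, hfr⟩ := exists_qFresh hreg [X, Y, Z] (by simp [hX, hY, hZ]) {b, y, z}
    simp only [Finset.mem_insert, Finset.mem_singleton, not_or] at hu
    have huX := hfr X (by simp) xs
    have huY := hfr Y (by simp) xs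
    have huZ := hfr Z (by simp) xs
    have hR : ∀ W W', Alpha (qSwap u b xs X) W → Alpha W W' → Alpha (qSwap u b xs X) W' :=
      ih u b xs (qGood_qSwap.2 hX)
    have hRY : Alpha (qSwap u b xs X) (qSwap u y xs Y) :=
      qSwap_transport hreg hR hX hY hy1 hu1X hu1Y h1 (by simp [hu.1, hu.2.1]) huX huY
        (alpha_refl hreg (qGood_qSwap.2 hX))
    have hRZ : Alpha (qSwap u b xs X) (qSwap u z xs Z) :=
      qSwap_transport hreg hR hY hZ hz2 hu2Y hu2Z h2 (by simp [hu.2.1, hu.2.2]) huY huZ hRY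
    exact .qAbs (by simp [hu.1, hu.2.2]) huX huZ hRZ

theorem Alpha.trans (hreg : (#var).IsRegular) {X Y Z : QTerm var varsort index bindex opsym}
    (hX : QGood X) (h1 : Alpha X Y) (h2 : Alpha Y Z) : Alpha X Z :=
  (alpha_trans_and hreg).1 X hX Y Z h1 h2

theorem alphaAbs_qAbs_of_alpha_qSwap (hreg : (#var).IsRegular) {xs : varsort} {x u : var}
    {X X' : QTerm var varsort index bindex opsym} (hX : QGood X) (hu : QFresh xs u X)
    (hux : u ≠ x) (h : Alpha (qSwap u x xs X) X') : AlphaAbs (.qAbs xs x X) (.qAbs xs u X') := by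
  have hX' : QGood X' := h.qGood (qGood_qSwap.2 hX)
  obtain ⟨w, hw, hfr⟩ := exists_qFresh hreg [X, X'] (by simp [hX, hX']) {x, u}
  simp only [Finset.mem_insert, Finset.mem_singleton, not_or] at hw
  have hwX := hfr X (by simp) xs
  refine .qAbs (y := w) (by simp [hw.1, hw.2]) hwX (hfr X' (by simp) xs) ?_
  have hswap : Alpha (qSwap w x xs X) (qSwap w x xs (qSwap w u xs X)) :=
    ((alpha_qSwap_of_qFresh hreg hX hwX hu).qSwap w x xs).symm
  rw [← qSwap_qSwap_of_ne _ (Ne.symm hw.1) hux.symm] at hswap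
  exact hswap.trans hreg (qGood_qSwap.2 hX) (h.qSwap w u xs)

end AlphaEquivalence

section Substitution

open Cardinal

theorem qSubst_qGood {X Y Z : QTerm var varsort index bindex opsym} {y : var} {ys : varsort}
    (h : QSubst X Y y ys Z) (hX : QGood X) (hY : QGood Y) : QGood Z := by
  refine QSubst.rec (motive_1 := fun X Y _ _ Z _ => QGood X → QGood Y → QGood Z)
    (motive_2 := fun A Y _ _ C _ => QGoodAbs A → QGood Y → QGoodAbs C)
    (fun _ hY => hY) (fun _ _ _ => .qVar) (fun hn _ hbn _ ih ihb hg hY => ?_)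
    (fun _ _ _ ih hg hY => .qAbs (ih (qGoodAbs_qAbs_iff.1 hg) hY)) h hX hY
  obtain ⟨hg, hgb, hs, hbs⟩ := qGood_qOp_iff.1 hg
  have h : liftRel (fun X Z => QGood X → QGood Z) _ _ :=
    ⟨hn, fun i X Z hX hZ hg => ih i X Z hX hZ hg hY⟩
  have hb : liftRel (fun A C => QGoodAbs A → QGoodAbs C) _ _ :=
    ⟨hbn, fun j A C hA hC hg => ihb j A C hA hC hg hY⟩
  exact .qOp (h.liftP hg) (hb.liftP hgb) (smallDom_of_liftRel h hs) (smallDom_of_liftRel hb hbs)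

theorem qSubst_qVar_alpha_qSwap (hreg : (#var).IsRegular)
    {X Z : QTerm var varsort index bindex opsym} {v y : var} {ys : varsort}
    (h : QSubst X (.qVar ys v) y ys Z) (hv : QFresh ys v X) (hX : QGood X) :
    Alpha Z (qSwap v y ys X) := by
  refine QSubst.rec
    (motive_1 := fun X Y y ys Z _ => ∀ v, Y = .qVar ys v → QFresh ys v X → QGood X →
      Alpha Z (qSwap v y ys X))
    (motive_2 := fun A Y y ys C _ => ∀ v, Y = .qVar ys v → QFreshAbs ys v A → QGoodAbs A →
      AlphaAbs C (qSwapAbs v y ys A))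
    (fun v hY _ _ => ?_) (fun hne v hY hv _ => ?_) (fun hn _ hbn _ ih ihb v hY hv hg => ?_)
    (fun hne hfr hS ih v hY hv hg => ?_) h v rfl hv hX
  · rw [hY, qSwap_qVar, swapVarS_self, Equiv.swap_apply_right]
    exact .qVar
  · rw [qSwap_qVar, swapVarS_of_pair_ne (Ne.symm (qFresh_qVar_iff.1 hv)) hne]
    exact .qVar
  · obtain ⟨hv, hvb⟩ := qFresh_qOp_iff.1 hv
    obtain ⟨hg, hgb, -, -⟩ := qGood_qOp_iff.1 hg
    have h := (liftRel_liftF_right (R := Alpha)).2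
      ⟨fun i => (hn i).symm, fun i Z X hZ hX => ih i X Z hX hZ v hY (hv i X hX) (hg i X hX)⟩
    have hb := (liftRel_liftF_right (R := AlphaAbs)).2
      ⟨fun j => (hbn j).symm, fun j C A hC hA => ihb j A C hA hC v hY (hvb j A hA) (hgb j A hA)⟩
    rw [qSwap_qOp]
    exact .qOp h.1 h.2 hb.1 hb.2
  · subst hY
    have hxv := qFresh_qVar_iff.1 hfr
    have hX := qGoodAbs_qAbs_iff.1 hg
    have hv := (qFreshAbs_qAbs_iff.1 hv).resolve_left (Ne.symm hxv)
    rw [qSwapAbs_qAbs, swapVarS_of_pair_ne hxv hne]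
    exact alphaAbs_qAbs_of_alpha hreg (qSubst_qGood hS hX .qVar) (ih v rfl hv hX)

theorem exists_alpha_qSubst (hreg : (#var).IsRegular) {Y : QTerm var varsort index bindex opsym}
    (hY : QGood Y) (y : var) (ys : varsort) {X : QTerm var varsort index bindex opsym}
    (hX : QGood X) : ∃ X' Z, Alpha X X' ∧ QSubst X' Y y ys Z := by
  refine (qterm_qabs_ind_qSwap
    (P := fun X => QGood X → ∃ X' Z, Alpha X X' ∧ QSubst X' Y y ys Z)
    (Q := fun A => QGoodAbs A → ∃ A' C, AlphaAbs A A' ∧ QSubstAbs A' Y y ys C)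
    (fun xs x _ => ?_) (fun d inp binp ih ihb hg => ?_) (fun zs z B ih hg => ?_)).1 X hX
  · by_cases h : (xs, x) = (ys, y)
    · obtain ⟨rfl, rfl⟩ := Prod.mk.inj h
      exact ⟨_, _, .qVar, .var_eq⟩
    · exact ⟨_, _, .qVar, .var_ne h⟩
  · obtain ⟨hg, hgb, -, -⟩ := qGood_qOp_iff.1 hg
    obtain ⟨p, hp⟩ := exists_liftRel (R := fun X q => Alpha X q.1 ∧ QSubst q.1 Y y ys q.2)
      fun i X hX => let ⟨X', Z, h⟩ := ih i X hX (hg i X hX); ⟨(X', Z), h⟩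
    obtain ⟨pb, hpb⟩ :=
      exists_liftRel (R := fun A q => AlphaAbs A q.1 ∧ QSubstAbs q.1 Y y ys q.2)
      fun j A hA => let ⟨A', C, h⟩ := ihb j A hA (hgb j A hA); ⟨(A', C), h⟩
    have h := liftRel_liftF_right.2 (liftRel.mono hp fun _ _ h => h.1)
    have hb := liftRel_liftF_right.2 (liftRel.mono hpb fun _ _ h => h.1)
    have hs := liftRel_liftF_liftF (R := (QSubst · Y y ys ·)) (f := Prod.fst) (g := Prod.snd)
      (liftRel.liftP_right hp fun _ _ h => h.2)
    have hsb := liftRel_liftF_liftF (R := (QSubstAbs · Y y ys ·)) (f := Prod.fst) (g := Prod.snd)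
      (liftRel.liftP_right hpb fun _ _ h => h.2)
    exact ⟨_, _, .qOp h.1 h.2 hb.1 hb.2, .op hs.1 hs.2 hsb.1 hsb.2⟩
  · have hB := qGoodAbs_qAbs_iff.1 hg
    obtain ⟨u, hu, hfr⟩ := exists_qFresh hreg [B, Y] (by simp [hB, hY]) {y, z}
    simp only [Finset.mem_insert, Finset.mem_singleton, not_or] at hu
    obtain ⟨X', Z, hα, hS⟩ := ih u z zs (qGood_qSwap.2 hB)
    exact ⟨_, _, alphaAbs_qAbs_of_alpha_qSwap hreg hB (hfr B (by simp) zs) hu.2 hα,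
      .abs (fun h => hu.1 (Prod.mk.inj h).2) (hfr Y (by simp) zs) hS⟩

end Substitution

section Quotient

open Cardinal

theorem eq_qVar_of_eqvGen_alpha {X : QTerm var varsort index bindex opsym} {xs : varsort} {y : var}
    (h : Relation.EqvGen Alpha X (.qVar xs y)) : X = .qVar xs y := by
  suffices H : ∀ X Y : QTerm var varsort index bindex opsym, Relation.EqvGen Alpha X Y →
      (X = .qVar xs y ↔ Y = .qVar xs y) from (H _ _ h).2 rfl
  intro X Y h
  induction h with
  | rel X Y h => cases h <;> simp
  | refl => rfl
  | symm _ _ _ ih => exact ih.symm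
  | trans _ _ _ _ _ ih₁ ih₂ => exact ih₁.trans ih₂

theorem trep_Var (xs : varsort) (y : var) :
    trep (Var xs y : Term var varsort index bindex opsym) = .qVar xs y :=
  eq_qVar_of_eqvGen_alpha (Quot.eq.1 (Quot.out_eq (Var xs y)))

theorem alpha_of_eqvGen (hreg : (#var).IsRegular) {X Y : QTerm var varsort index bindex opsym}
    (h : Relation.EqvGen Alpha X Y) (hg : QGood X ∨ QGood Y) : Alpha X Y := by
  induction h with
  | rel _ _ h => exact h
  | refl X => exact alpha_refl hreg (hg.elim id id)
  | symm _ _ _ ih => exact (ih hg.symm).symm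
  | trans X Y Z _ _ ih₁ ih₂ =>
    rcases hg with hX | hZ
    · have hXY := ih₁ (.inl hX)
      exact hXY.trans hreg hX (ih₂ (.inl (hXY.qGood hX)))
    · have hYZ := ih₂ (.inr hZ)
      have hY := hYZ.symm.qGood hZ
      have hXY := ih₁ (.inr hY)
      exact hXY.trans hreg (hXY.symm.qGood hY) hYZ

theorem tmk_eq_tmk_iff (hreg : (#var).IsRegular) {X Y : QTerm var varsort index bindex opsym}
    (hX : QGood X) : tmk X = tmk Y ↔ Alpha X Y :=
  ⟨fun h => alpha_of_eqvGen hreg (Quot.eq.1 h) (.inl hX), Quot.sound⟩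

theorem subst_Var_eq_tmk_qSwap (hreg : (#var).IsRegular) {X : Term var varsort index bindex opsym}
    (hX : good X) {xs : varsort} {x y : var} (hy : fresh xs y X) :
    subst X (Var xs y) x xs = tmk (qSwap y x xs (trep X)) := by
  obtain ⟨X', Z, hα, hS⟩ := exists_alpha_qSubst hreg (QGood.qVar (xs := xs) (x := y)) x xs hX
  have hex : ∃ Z, SubstRel X (Var xs y) x xs Z :=
    ⟨tmk Z, X', Z, (Quot.sound hα).symm.trans (Quot.out_eq X), rfl, by rwa [trep_Var]⟩
  obtain ⟨qX, qZ, hqX, hqZ, hqS⟩ := hex.choose_spec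
  rw [subst, dif_pos hex, ← hqZ]
  rw [trep_Var] at hqS
  have hα' : Alpha (trep X) qX := (tmk_eq_tmk_iff hreg hX).1 ((Quot.out_eq X).trans hqX.symm)
  have hqX' : QGood qX := hα'.qGood hX
  exact Quot.sound <| (qSubst_qVar_alpha_qSwap hreg hqS (hα'.qFresh hy) hqX').trans hreg
    (qSubst_qGood hqS hqX' .qVar) (hα'.symm.qSwap y x xs)

end Quotient

/-- for good terms `X`, `X'`, if `y ∉ {x,x'}` is fresh for both and
the substitutions of `Var xs y` for `x` resp. `x'` agree, then the abstractions
`Abs xs x X` and `Abs xs x' X'` are equal. -/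
theorem abs_eq_of_subst (hinf : Cardinal.aleph0 ≤ Cardinal.mk var)
    (hreg : (Cardinal.mk var).IsRegular)
    (X X' : Term var varsort index bindex opsym) (hX : good X) (hX' : good X')
    (xs : varsort) (x x' y : var)
    (hy : y ∉ ({x, x'} : Set var))
    (hfr : fresh xs y X) (hfr' : fresh xs y X')
    (heq : subst X (Var xs y) x xs = subst X' (Var xs y) x' xs) :
    Abs xs x X = Abs xs x' X' := by
  rw [subst_Var_eq_tmk_qSwap hreg hX hfr, subst_Var_eq_tmk_qSwap hreg hX' hfr',
    tmk_eq_tmk_iff hreg (qGood_qSwap.2 hX)] at heq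
  exact Quot.sound (.qAbs hy hfr hfr' heq)

end Binding
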